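/- Let u, Delta in R^d with Delta nonzero, eta, R > 0, q in (0,1/2), xi >= 0 with xi < q sqrt(R), and w_th satisfying 1/(1 + eta (1-q)^2 ||Delta||^2) < w_th < 1/(1 + eta q^2 ||Delta||^2). Let x ~ N(0, I_d) and epsilon independent of x with |epsilon| <= xi ||Delta||. Define w(x,epsilon) = 1/(1 + eta (x^T u + epsilon)^2 / R). If ||u||/||Delta|| >= 1 - q + xi/sqrt(R), then P[w(x,epsilon) < w_th | ||x||^2 <= R] > 0. -/
import Mathlib


open MeasureTheory ProbabilityTheory
open scoped ProbabilityTheory ENNReal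

instance gaussianReal_isOpenPosMeasure : (gaussianReal 0 1).IsOpenPosMeasure := by
  constructor
  intro U hU hne h0
  rw [gaussianReal_of_var_ne_zero 0 one_ne_zero,
    withDensity_apply_eq_zero (measurable_gaussianPDF 0 1)] at h0
  have : {x | gaussianPDF 0 1 x ≠ 0} ∩ U = U := by
    ext x
    simp [ (gaussianPDF_pos 0 one_ne_zero x).ne' ]
  rw [this] at h0
  exact (hU.measure_pos volume hne).ne' h0

lemma aux_exists_t {b nu R : ℝ} (hR : 0 < R) (hnu : 0 < nu) (hb : 0 ≤ b)
    (hblt : b < Real.sqrt R * nu) : ∃ t : ℝ, t ^ 2 * nu ^ 2 < R ∧ b < t * nu ^ 2 := by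
  refine ⟨(b + Real.sqrt R * nu) / (2 * nu ^ 2), ?_, ?_⟩
  · have htnu : (b + Real.sqrt R * nu) / (2 * nu ^ 2) * nu = (b + Real.sqrt R * nu) / (2 * nu) := by
      field_simp
    have h1 : 0 < (b + Real.sqrt R * nu) / (2 * nu ^ 2) * nu := by
      rw [htnu]; positivity
    have h2 : (b + Real.sqrt R * nu) / (2 * nu ^ 2) * nu < Real.sqrt R := by
      rw [htnu, div_lt_iff₀ (by positivity : (0:ℝ) < 2 * nu)]
      nlinarith
    have hRsq : Real.sqrt R ^ 2 = R := Real.sq_sqrt hR.le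
    nlinarith
  · rw [div_mul_eq_mul_div, lt_div_iff₀ (by positivity : (0:ℝ) < 2 * nu ^ 2)]
    nlinarith [mul_lt_mul_of_pos_right hblt (by positivity : (0:ℝ) < nu ^ 2)]

set_option maxHeartbeats 1600000 in
/-- Probabilistic part of Lemma P. With `x ~ N(0,I_d)` and `ε` independent of
`x`, `|ε| ≤ ξ‖Δ‖` a.s., `w_th` in the stated interval, and `‖u‖/‖Δ‖ ≥ 1 - q + ξ/√R`, the event
`{w(x,ε) < w_th}` has positive probability conditional on `{‖x‖² ≤ R}`. -/
theorem stmt11 (d : ℕ) (u Δ : Fin d → ℝ) (hΔ : Δ ≠ 0)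
    (η R q w_th ξ : ℝ) (hη : 0 < η) (hR : 0 < R) (hq0 : 0 < q) (hq : q < 1 / 2)
    (hξ0 : 0 ≤ ξ) (hξ : ξ < q * Real.sqrt R)
    (hwth_lo : 1 / (1 + η * (1 - q) ^ 2 * (∑ i, Δ i ^ 2)) < w_th)
    (hwth_hi : w_th < 1 / (1 + η * q ^ 2 * (∑ i, Δ i ^ 2)))
    (ν : Measure ℝ) [IsProbabilityMeasure ν]
    (hbdd : ∀ᵐ e ∂ν, |e| ≤ ξ * Real.sqrt (∑ i, Δ i ^ 2))
    (hu : Real.sqrt (∑ i, u i ^ 2) / Real.sqrt (∑ i, Δ i ^ 2) ≥ 1 - q + ξ / Real.sqrt R) :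
    0 < (((Measure.pi fun _ : Fin d => gaussianReal 0 1).prod ν)[|
          {p : (Fin d → ℝ) × ℝ | ∑ i, p.1 i ^ 2 ≤ R}])
        {p : (Fin d → ℝ) × ℝ |
          1 / (1 + η * ((∑ i, p.1 i * u i) + p.2) ^ 2 / R) < w_th} := by
  set μ : Measure (Fin d → ℝ) := Measure.pi fun _ : Fin d => gaussianReal 0 1 with hμ
  set P : Measure ((Fin d → ℝ) × ℝ) := μ.prod ν with hP
  -- basic positivity facts
  have hsqR : 0 < Real.sqrt R := Real.sqrt_pos.mpr hR
  have hΔ2 : 0 < ∑ i, Δ i ^ 2 := by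
    rcases Function.ne_iff.mp hΔ with ⟨i, hi⟩
    have : 0 < Δ i ^ 2 := pow_two_pos_of_ne_zero hi
    exact Finset.sum_pos' (fun j _ => sq_nonneg _) ⟨i, Finset.mem_univ i, this⟩
  set D2 : ℝ := ∑ i, Δ i ^ 2 with hD2
  set nΔ : ℝ := Real.sqrt D2 with hnΔ
  have hnΔpos : 0 < nΔ := Real.sqrt_pos.mpr hΔ2
  set nu : ℝ := Real.sqrt (∑ i, u i ^ 2) with hnu
  have hnu_ge : nu ≥ (1 - q + ξ / Real.sqrt R) * nΔ :=
    (le_div_iff₀ hnΔpos).mp hu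
  have hnΔsq : nΔ ^ 2 = D2 := Real.sq_sqrt hΔ2.le
  have hnusq : nu ^ 2 = ∑ i, u i ^ 2 := Real.sq_sqrt (by positivity)
  have hnunn : 0 ≤ nu := Real.sqrt_nonneg _
  clear_value D2 nΔ nu
  have h1q : 0 < 1 - q := by linarith
  have hnupos : 0 < nu := by
    have : 0 < (1 - q + ξ / Real.sqrt R) * nΔ := by positivity
    linarith
  -- bounds on w_th
  have hden1 : 0 < 1 + η * (1 - q) ^ 2 * D2 := by positivity
  have hwth_pos : 0 < w_th := lt_trans (by positivity) hwth_lo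
  have hwth_lt_one : w_th < 1 := by
    have hden2 : 0 < 1 + η * q ^ 2 * D2 := by positivity
    have : 1 / (1 + η * q ^ 2 * D2) ≤ 1 := by
      rw [div_le_one hden2]
      nlinarith [mul_pos (mul_pos hη (pow_pos hq0 2)) hΔ2]
    linarith
  have hinv : 1 / w_th < 1 + η * (1 - q) ^ 2 * D2 := by
    rw [div_lt_iff₀ hwth_pos, mul_comm]
    exact (div_lt_iff₀ hden1).mp hwth_lo
  -- the threshold c
  have hc2nonneg : 0 ≤ (1 / w_th - 1) * R / η := by
    have : 1 ≤ 1 / w_th := by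
      rw [le_div_iff₀ hwth_pos]; linarith
    have h1 : 0 ≤ 1 / w_th - 1 := by linarith
    positivity
  set c : ℝ := Real.sqrt ((1 / w_th - 1) * R / η) with hc
  have hcnonneg : 0 ≤ c := Real.sqrt_nonneg _
  have hcsq : c ^ 2 = (1 / w_th - 1) * R / η := Real.sq_sqrt hc2nonneg
  have hclt : c < Real.sqrt R * (1 - q) * nΔ := by
    have hRsq : Real.sqrt R ^ 2 = R := Real.sq_sqrt hR.le
    have hlin : 1 / w_th - 1 < η * (1 - q) ^ 2 * D2 := by linarith
    have hstep : (1 / w_th - 1) * R / η < (1 - q) ^ 2 * D2 * R := by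
      rw [div_lt_iff₀ hη]
      nlinarith [mul_lt_mul_of_pos_right hlin hR]
    have hsq : (Real.sqrt R * (1 - q) * nΔ) ^ 2 = (1 - q) ^ 2 * D2 * R := by
      rw [mul_pow, mul_pow, hRsq, hnΔsq]; ring
    have h1 : c ^ 2 < (Real.sqrt R * (1 - q) * nΔ) ^ 2 := by
      rw [hcsq, hsq]; exact hstep
    have h2 : 0 ≤ Real.sqrt R * (1 - q) * nΔ := by positivity
    exact lt_of_pow_lt_pow_left₀ 2 h2 h1
  clear_value c
  -- b := c + ξ nΔ < √R * nu
  set b : ℝ := c + ξ * nΔ with hb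
  have hbnonneg : 0 ≤ b := add_nonneg hcnonneg (mul_nonneg hξ0 hnΔpos.le)
  clear_value b
  have hblt : b < Real.sqrt R * nu := by
    have h1 : Real.sqrt R * nu ≥ Real.sqrt R * ((1 - q + ξ / Real.sqrt R) * nΔ) :=
      mul_le_mul_of_nonneg_left hnu_ge hsqR.le
    have h2 : Real.sqrt R * ((1 - q + ξ / Real.sqrt R) * nΔ)
        = Real.sqrt R * (1 - q) * nΔ + ξ * nΔ := by
      field_simp
    rw [h2] at h1
    have := hclt
    simp only [hb]
    linarith
  -- the open set U
  set U : Set (Fin d → ℝ) := {x | ∑ i, x i ^ 2 < R ∧ b < ∑ i, x i * u i} with hU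
  have hUopen : IsOpen U := by
    apply IsOpen.inter
    · exact isOpen_lt (continuous_finset_sum _ fun i _ => (continuous_apply i).pow 2)
        continuous_const
    · exact isOpen_lt continuous_const
        (continuous_finset_sum _ fun i _ => (continuous_apply i).mul continuous_const)
  have hUne : U.Nonempty := by
    obtain ⟨t, ht1, ht2⟩ := aux_exists_t hR hnupos hbnonneg hblt
    refine ⟨fun i => t * u i, ?_, ?_⟩
    · have hu2 : ∑ i, (t * u i) ^ 2 = t ^ 2 * nu ^ 2 := by
        rw [hnusq, Finset.mul_sum]; congr 1; ext i; ring
      rw [hu2]; exact ht1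
    · have hu2 : ∑ i, (t * u i) * u i = t * nu ^ 2 := by
        rw [hnusq, Finset.mul_sum]; congr 1; ext i; ring
      rw [hu2]; exact ht2
  have hμU : 0 < μ U := hUopen.measure_pos μ hUne
  -- the good set for ε
  set G : Set ℝ := {e | |e| ≤ ξ * nΔ} with hG
  have hGmeas : MeasurableSet G := by
    have : G = (fun e => |e|) ⁻¹' Set.Iic (ξ * nΔ) := rfl
    rw [this]; exact (measurable_abs) measurableSet_Iic
  have hνG : ν G = 1 := by
    have h0 : ν Gᶜ = 0 := by
      refine measure_mono_null ?_ (ae_iff.mp hbdd)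
      intro e he
      simpa [hG] using he
    exact (prob_compl_eq_zero_iff hGmeas).mp h0
  -- event sets
  set S : Set ((Fin d → ℝ) × ℝ) := {p | ∑ i, p.1 i ^ 2 ≤ R} with hS
  set T : Set ((Fin d → ℝ) × ℝ) :=
    {p | 1 / (1 + η * ((∑ i, p.1 i * u i) + p.2) ^ 2 / R) < w_th} with hT
  have hSmeas : MeasurableSet S := by
    have : S = (fun p : (Fin d → ℝ) × ℝ => ∑ i, p.1 i ^ 2) ⁻¹' Set.Iic R := rfl
    rw [this]
    exact (Finset.measurable_sum Finset.univ fun i _ =>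
      ((measurable_pi_apply i).comp measurable_fst).pow_const 2) measurableSet_Iic
  -- U ×ˢ G ⊆ S ∩ T
  have hsub : U ×ˢ G ⊆ S ∩ T := by
    rintro ⟨x, e⟩ ⟨⟨hx1, hx2⟩, he⟩
    constructor
    · exact le_of_lt hx1
    · simp only [hT, Set.mem_setOf_eq]
      set a : ℝ := (∑ i, x i * u i) + e with ha
      clear_value a
      have hea : -(ξ * nΔ) ≤ e := neg_le_of_abs_le he
      have hx2' : b < ∑ i, x i * u i := hx2
      have haglt : c < a := by rw [ha]; linarith [hb.le, hb.ge]
      clear hx2 he hx2' hea ha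
      have ha2 : c ^ 2 < a ^ 2 := by nlinarith [haglt, hcnonneg]
      have hkey : 1 / w_th < 1 + η * a ^ 2 / R := by
        have : (1 / w_th - 1) * R / η < a ^ 2 := by rw [← hcsq]; exact ha2
        rw [div_lt_iff₀ hη] at this
        have h2 : (1 / w_th - 1) * R < η * a ^ 2 := by linarith
        rw [← sub_lt_iff_lt_add', lt_div_iff₀ hR]
        linarith
      have hpos : 0 < 1 + η * a ^ 2 / R := lt_trans (by positivity) hkey
      calc 1 / (1 + η * a ^ 2 / R) < 1 / (1 / w_th) :=
            one_div_lt_one_div_of_lt (by positivity) hkey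
        _ = w_th := one_div_one_div w_th
  -- conclude
  have hPprod : P (U ×ˢ G) = μ U * ν G := Measure.prod_prod U G
  have hPST : 0 < P (S ∩ T) := by
    calc (0 : ℝ≥0∞) < μ U * ν G := by
          rw [hνG, mul_one]; exact hμU
      _ = P (U ×ˢ G) := hPprod.symm
      _ ≤ P (S ∩ T) := measure_mono hsub
  rw [cond_apply hSmeas P T]
  refine ENNReal.mul_pos ?_ hPST.ne'
  simp only [ne_eq, ENNReal.inv_eq_zero]
  exact measure_ne_top P S
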